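/- Let d ≥ 1 and t ≥ 1, and let H be the real span, inside the real vector space of functions (Fin d → ℍ) → ℝ, of the set { (fun z => (normSq ∑_a star(v a) * (z a))^t) : v ∈ Fin d → ℍ }. For w : Fin d → ℍ let K_w ∈ H be the function z ↦ ( normSq( ∑_a star(z a) * (w a) ) )^t. Then there exists exactly one symmetric positive-definite bilinear form B : H → H → ℝ such that for every w : Fin d → ℍ and every f ∈ H, B (K_w) f = f(w). -/

import Mathlib

open Quaternion

/-!
The kernel factors through a feature map: `|⟨u,v⟩|² = ⟪u u*, v v*⟫` is a real inner product of
the rank-one matrices `(u_a u_b*)_{a,b}`, and its `t`-th power is again an inner product of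
features, the `t`-fold products of coordinates in an orthonormal basis. For a kernel
`k u v = ⟪φ u, φ v⟫` the map `e ↦ ⟪e, φ ·⟫` is a linear isomorphism from `span (range φ)` onto the
span `H` of the functions `k v`, since a vector of `span (range φ)` orthogonal to every `φ z` is
zero. Transporting the inner product along it gives the form, and the reproducing property pins
down any form that is linear in its first argument on the generators `k v` of `H`.
-/

open scoped RealInnerProductSpace

theorem IsLinearMap.ext_on_span {R M N : Type*} [Semiring R] [AddCommMonoid M] [Module R M]
    [AddCommMonoid N] [Module R N] {s : Set M} {F G : Submodule.span R s → N}
    (hF : IsLinearMap R F) (hG : IsLinearMap R G)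
    (h : ∀ x (hx : x ∈ s), F ⟨x, Submodule.subset_span hx⟩ = G ⟨x, Submodule.subset_span hx⟩) :
    F = G :=
  congrArg DFunLike.coe <| LinearMap.ext_on (f := IsLinearMap.mk' F hF) (g := IsLinearMap.mk' G hG)
    Submodule.span_span_coe_preimage fun x hx => h x hx

section FeatureSpace

variable {X E : Type*} [NormedAddCommGroup E] [InnerProductSpace ℝ E] (φ : X → E)

noncomputable def innerWith : E →ₗ[ℝ] X → ℝ := LinearMap.pi fun z => (innerₗ E).flip (φ z)

lemma injective_innerWith_domRestrict :
    Function.Injective ((innerWith φ).domRestrict (Submodule.span ℝ (Set.range φ))) := by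
  rw [← LinearMap.ker_eq_bot, LinearMap.ker_eq_bot']
  rintro ⟨e, he⟩ h0
  have hspan : Submodule.span ℝ (Set.range φ) ≤ LinearMap.ker (innerₗ E e) := by
    rw [Submodule.span_le]
    rintro _ ⟨z, rfl⟩
    exact congrFun h0 z
  exact Subtype.ext (inner_self_eq_zero.mp (hspan he))

lemma range_innerWith_domRestrict :
    LinearMap.range ((innerWith φ).domRestrict (Submodule.span ℝ (Set.range φ))) =
      Submodule.span ℝ {f | ∃ v, f = fun z => ⟪φ v, φ z⟫} := by
  rw [LinearMap.range_domRestrict, Submodule.map_span, ← Set.range_comp]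
  congr 1
  ext f
  simp only [Set.mem_range, Set.mem_ofPred_eq, eq_comm]
  rfl

noncomputable def featureEquiv :
    Submodule.span ℝ (Set.range φ) ≃ₗ[ℝ] Submodule.span ℝ {f | ∃ v, f = fun z => ⟪φ v, φ z⟫} :=
  (LinearEquiv.ofInjective _ (injective_innerWith_domRestrict φ)).trans
    (LinearEquiv.ofEq _ _ (range_innerWith_domRestrict φ))

lemma inner_featureEquiv_symm_apply (f : Submodule.span ℝ {f | ∃ v, f = fun z => ⟪φ v, φ z⟫})
    (w : X) : ⟪((featureEquiv φ).symm f : E), φ w⟫ = f.1 w := by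
  conv_rhs => rw [← (featureEquiv φ).apply_symm_apply f]
  rfl

lemma featureEquiv_symm_apply_kernel (w : X)
    (hw : (fun z => ⟪φ z, φ w⟫) ∈ Submodule.span ℝ {f | ∃ v, f = fun z => ⟪φ v, φ z⟫}) :
    (featureEquiv φ).symm ⟨_, hw⟩ = ⟨φ w, Submodule.subset_span ⟨w, rfl⟩⟩ := by
  rw [LinearEquiv.symm_apply_eq]
  ext z
  exact real_inner_comm _ _

end FeatureSpace

theorem existsUnique_reproducing_form {X E : Type*} [NormedAddCommGroup E]
    [InnerProductSpace ℝ E] (φ : X → E) (k : X → X → ℝ) (hk : ∀ u v, k u v = ⟪φ u, φ v⟫) :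
    ∃! B : Submodule.span ℝ {f | ∃ v, f = fun z => k v z} →
        Submodule.span ℝ {f | ∃ v, f = fun z => k v z} → ℝ,
      (∀ f g, B f g = B g f)
      ∧ (∀ f g h, B (f + g) h = B f h + B g h)
      ∧ (∀ (c : ℝ) f g, B (c • f) g = c * B f g)
      ∧ (∀ f, f ≠ 0 → 0 < B f f)
      ∧ (∀ (w : X) (hw : (fun z => k z w) ∈ Submodule.span ℝ {f | ∃ v, f = fun z => k v z})
          (f : Submodule.span ℝ {f | ∃ v, f = fun z => k v z}), B ⟨_, hw⟩ f = f.1 w) := by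
  obtain rfl : k = fun u v => ⟪φ u, φ v⟫ := funext₂ hk
  beta_reduce
  set L := (featureEquiv φ).symm
  set B₀ := fun f g => ⟪(L f : E), L g⟫
  have hadd : ∀ f g h, B₀ (f + g) h = B₀ f h + B₀ g h := fun f g h => by
    simp only [B₀, map_add, Submodule.coe_add, inner_add_left]
  have hsmul : ∀ (c : ℝ) f g, B₀ (c • f) g = c * B₀ f g := fun c f g => by
    simp only [B₀, map_smul, Submodule.coe_smul, real_inner_smul_left]
  have hrepro : ∀ w hw f, B₀ ⟨fun z => ⟪φ z, φ w⟫, hw⟩ f = f.1 w := fun w hw f => by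
    simp only [B₀, L, featureEquiv_symm_apply_kernel, real_inner_comm _ (φ w),
      inner_featureEquiv_symm_apply]
  refine ⟨B₀, ⟨fun f g => real_inner_comm _ _, hadd, hsmul, fun f hf => ?_, hrepro⟩, ?_⟩
  · exact real_inner_self_pos.2 (by simpa using hf)
  rintro B ⟨-, hBadd, hBsmul, -, hBrepro⟩
  funext f g
  refine congrFun (IsLinearMap.ext_on_span (F := (B · g)) (G := (B₀ · g))
    ⟨(hBadd · · g), (hBsmul · · g)⟩ ⟨(hadd · · g), (hsmul · · g)⟩ ?_) f
  rintro _ ⟨v, rfl⟩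
  have hsymm : (fun z => ⟪φ v, φ z⟫) = fun z => ⟪φ z, φ v⟫ := funext fun z => real_inner_comm _ _
  have hv : (fun z => ⟪φ z, φ v⟫) ∈ Submodule.span ℝ {f | ∃ v, f = fun z => ⟪φ v, φ z⟫} :=
    hsymm ▸ Submodule.subset_span ⟨v, rfl⟩
  have hK : (⟨_, Submodule.subset_span ⟨v, rfl⟩⟩ :
      Submodule.span ℝ {f | ∃ v, f = fun z => ⟪φ v, φ z⟫}) = ⟨_, hv⟩ := Subtype.ext hsymm
  rw [hK, hBrepro v hv, hrepro v hv]

noncomputable def powFeature {ι E : Type*} [Fintype ι] [NormedAddCommGroup E]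
    [InnerProductSpace ℝ E] (b : OrthonormalBasis ι ℝ E) (t : ℕ) (x : E) :
    EuclideanSpace ℝ (Fin t → ι) :=
  WithLp.toLp 2 fun g => ∏ s, b.repr x (g s)

lemma inner_powFeature {ι E : Type*} [Fintype ι] [NormedAddCommGroup E]
    [InnerProductSpace ℝ E] (b : OrthonormalBasis ι ℝ E) (t : ℕ) (x y : E) :
    ⟪powFeature b t x, powFeature b t y⟫ = ⟪x, y⟫ ^ t := by
  rw [← b.sum_inner_mul_inner, Fintype.sum_pow, PiLp.inner_apply]
  refine Finset.sum_congr rfl fun g _ => ?_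
  simp only [powFeature, b.repr_apply_apply, real_inner_comm x, Real.inner_apply,
    Finset.prod_mul_distrib]

lemma Quaternion.re_sum {R ι : Type*} [CommRing R] (s : Finset ι) (f : ι → ℍ[R]) :
    (∑ i ∈ s, f i).re = ∑ i ∈ s, (f i).re :=
  map_sum (QuaternionAlgebra.reₗ _ _ _) f s

lemma Quaternion.re_mul_comm {R : Type*} [CommRing R] (p q : ℍ[R]) : (p * q).re = (q * p).re := by
  simp only [Quaternion.re_mul]
  ring

noncomputable def gramFeature {d : ℕ} (v : Fin d → ℍ) : PiLp 2 fun _ : Fin d × Fin d => ℍ :=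
  WithLp.toLp 2 fun p => v p.1 * star (v p.2)

lemma inner_gramFeature {d : ℕ} (u v : Fin d → ℍ) :
    ⟪gramFeature u, gramFeature v⟫ = normSq (∑ a, star (u a) * v a) := by
  rw [normSq_def, star_sum, Finset.sum_mul_sum, PiLp.inner_apply, Fintype.sum_prod_type,
    Finset.sum_comm]
  simp only [gramFeature, Quaternion.inner_def, star_mul, star_star, Quaternion.re_sum]
  refine Finset.sum_congr rfl fun a _ => Finset.sum_congr rfl fun b _ => ?_
  rw [re_mul_comm]
  simp only [mul_assoc]
  rw [re_mul_comm (star (u a))]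
  simp only [mul_assoc]

theorem statement18_general (d t : ℕ) :
    ∃! B : ↥(Submodule.span ℝ
          {f : (Fin d → Quaternion ℝ) → ℝ |
            ∃ v : Fin d → Quaternion ℝ, f = fun z => (normSq (∑ a, star (v a) * z a)) ^ t}) →
        ↥(Submodule.span ℝ
          {f : (Fin d → Quaternion ℝ) → ℝ |
            ∃ v : Fin d → Quaternion ℝ, f = fun z => (normSq (∑ a, star (v a) * z a)) ^ t}) → ℝ,
      (∀ f g, B f g = B g f)
      ∧ (∀ f g h, B (f + g) h = B f h + B g h)
      ∧ (∀ (c : ℝ) f g, B (c • f) g = c * B f g)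
      ∧ (∀ f, f ≠ 0 → 0 < B f f)
      ∧ (∀ (w : Fin d → Quaternion ℝ)
          (hw : (fun z : Fin d → Quaternion ℝ => (normSq (∑ a, star (z a) * w a)) ^ t) ∈
            Submodule.span ℝ
              {f : (Fin d → Quaternion ℝ) → ℝ |
                ∃ v : Fin d → Quaternion ℝ, f = fun z => (normSq (∑ a, star (v a) * z a)) ^ t})
          (f : ↥(Submodule.span ℝ
            {f : (Fin d → Quaternion ℝ) → ℝ |
              ∃ v : Fin d → Quaternion ℝ, f = fun z => (normSq (∑ a, star (v a) * z a)) ^ t})),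
          B ⟨_, hw⟩ f = (f : (Fin d → Quaternion ℝ) → ℝ) w) :=
  existsUnique_reproducing_form (fun v => powFeature (stdOrthonormalBasis ℝ _) t (gramFeature v))
    (fun v z => normSq (∑ a, star (v a) * z a) ^ t)
    fun u v => by rw [inner_powFeature, inner_gramFeature]

/-- On `Hom_{ℍ^d}(t,t) = span_ℝ { |⟨v,·⟩|^{2t} : v ∈ ℍ^d }` there is a unique symmetric
positive-definite bilinear form for which `K_w(z) = |⟨z,w⟩|^{2t}` is the reproducing kernel
(the apolar inner product). -/
theorem statement18 (d t : ℕ) (hd : 1 ≤ d) (ht : 1 ≤ t) :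
    ∃! B : ↥(Submodule.span ℝ
          {f : (Fin d → Quaternion ℝ) → ℝ |
            ∃ v : Fin d → Quaternion ℝ, f = fun z => (normSq (∑ a, star (v a) * z a)) ^ t}) →
        ↥(Submodule.span ℝ
          {f : (Fin d → Quaternion ℝ) → ℝ |
            ∃ v : Fin d → Quaternion ℝ, f = fun z => (normSq (∑ a, star (v a) * z a)) ^ t}) → ℝ,
      (∀ f g, B f g = B g f)
      ∧ (∀ f g h, B (f + g) h = B f h + B g h)
      ∧ (∀ (c : ℝ) f g, B (c • f) g = c * B f g)
      ∧ (∀ f, f ≠ 0 → 0 < B f f)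
      ∧ (∀ (w : Fin d → Quaternion ℝ)
          (hw : (fun z : Fin d → Quaternion ℝ => (normSq (∑ a, star (z a) * w a)) ^ t) ∈
            Submodule.span ℝ
              {f : (Fin d → Quaternion ℝ) → ℝ |
                ∃ v : Fin d → Quaternion ℝ, f = fun z => (normSq (∑ a, star (v a) * z a)) ^ t})
          (f : ↥(Submodule.span ℝ
            {f : (Fin d → Quaternion ℝ) → ℝ |
              ∃ v : Fin d → Quaternion ℝ, f = fun z => (normSq (∑ a, star (v a) * z a)) ^ t})),
          B ⟨_, hw⟩ f = (f : (Fin d → Quaternion ℝ) → ℝ) w) :=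
  statement18_general d t
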